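/- Assume D((uC_φ)²) is dense in L²(μ), J_1 and J_2 are finite a.e., and uC_φ is 2-expansive (i.e. ‖f‖² − 2‖uC_φ f‖² + ‖(uC_φ)² f‖² ≤ 0 for all f ∈ D((uC_φ)²)). Then J_2 ≤ 2J_1 − 1 μ-a.e., and consequently uC_φ maps its domain into itself. -/

import Mathlib

open MeasureTheory ENNReal

/-!
With `J_i = weightedCompDensity μ u φ i` one has `‖(uC_φ)^i f‖² = ∫ J_i |f|² dμ`. Testing
2-expansivity on the indicator of a set `s` of finite measure on which `J_1` and `J_2` are
integrable gives `μ s + ∫_s J_2 ≤ 2 ∫_s J_1`. As `J_2` is finite a.e., such sets are plentiful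
enough to localise this to `J_2 + 1 ≤ 2 J_1` a.e. Then for `f` in the domain,
`‖(uC_φ)² f‖² = ∫ J_2 |f|² ≤ 2 ∫ J_1 |f|² = 2 ‖uC_φ f‖² < ∞`.
-/

section LpTwo

variable {X E : Type*} [MeasurableSpace X] {μ : Measure X} [NormedAddCommGroup E] {f : X → E}

lemma memLp_two_iff_lintegral_enorm_sq_lt_top (hf : AEStronglyMeasurable f μ) :
    MemLp f 2 μ ↔ ∫⁻ x, ‖f x‖ₑ ^ 2 ∂μ < ∞ := by
  rw [MemLp, eLpNorm_lt_top_iff_lintegral_rpow_enorm_lt_top two_ne_zero ofNat_ne_top]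
  simp [hf]

lemma integral_norm_sq_eq_toReal_lintegral (hf : AEStronglyMeasurable f μ) :
    ∫ x, ‖f x‖ ^ 2 ∂μ = (∫⁻ x, ‖f x‖ₑ ^ 2 ∂μ).toReal := by
  rw [integral_eq_lintegral_of_nonneg_ae (.of_forall fun _ => sq_nonneg _) (hf.norm.pow 2)]
  congr 1
  refine lintegral_congr fun x => ?_
  rw [ENNReal.ofReal_pow (norm_nonneg _), ofReal_norm]

end LpTwo

section Measure

variable {X Y : Type*} [MeasurableSpace X] [MeasurableSpace Y] {μ : Measure X}

lemma ae_le_of_forall_setLIntegral_le_of_lt_top [SigmaFinite μ] {f g : X → ℝ≥0∞}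
    (hf : Measurable f) (hg : Measurable g) (hf_fin : ∀ᵐ x ∂μ, f x < ∞)
    (h : ∀ s, MeasurableSet s → μ s < ∞ → ∫⁻ x in s, f x ∂μ < ∞ → ∫⁻ x in s, g x ∂μ < ∞ →
      ∫⁻ x in s, f x ∂μ ≤ ∫⁻ x in s, g x ∂μ) :
    f ≤ᵐ[μ] g := by
  let A : ℕ → Set X := fun n => {x | f x ≤ n ∧ g x ≤ n}
  have hA : ∀ n, MeasurableSet (A n) := fun n =>
    (hf measurableSet_Iic).inter (hg measurableSet_Iic)
  have h_on : ∀ n, ∀ᵐ x ∂μ, x ∈ A n → f x ≤ g x := by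
    intro n
    rw [← ae_restrict_iff' (hA n)]
    refine ae_le_of_forall_setLIntegral_le_of_sigmaFinite hf fun s hs hμs => ?_
    rw [Measure.restrict_apply hs] at hμs
    rw [Measure.restrict_restrict hs]
    have bound : ∀ F : X → ℝ≥0∞, (∀ x ∈ s ∩ A n, F x ≤ n) → ∫⁻ x in s ∩ A n, F x ∂μ < ∞ :=
      fun F hF => (setLIntegral_mono measurable_const hF).trans_lt <| by
        rw [setLIntegral_const]; exact mul_lt_top (natCast_lt_top n) hμs
    exact h _ (hs.inter (hA n)) hμs (bound f fun x hx => hx.2.1) (bound g fun x hx => hx.2.2)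
  filter_upwards [hf_fin, ae_all_iff.2 h_on] with x hfx hx
  obtain hgx | hgx := eq_top_or_lt_top (g x)
  · exact hgx ▸ le_top
  obtain ⟨n, hn⟩ := ENNReal.exists_nat_gt (max_lt hfx hgx).ne
  exact hx n ⟨(le_max_left _ _).trans hn.le, (le_max_right _ _).trans hn.le⟩

lemma lintegral_rnDeriv_map_withDensity_mul [SFinite μ] {ν : Measure Y} [SigmaFinite ν]
    {φ : X → Y} (hφ : Measure.QuasiMeasurePreserving φ μ ν) {ρ : X → ℝ≥0∞} {g : Y → ℝ≥0∞}
    (hρ : AEMeasurable ρ μ) (hg : AEMeasurable g ν) :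
    ∫⁻ y, ((μ.withDensity ρ).map φ).rnDeriv ν y * g y ∂ν = ∫⁻ x, ρ x * g (φ x) ∂μ := by
  have hac : (μ.withDensity ρ).map φ ≪ ν :=
    ((withDensity_absolutelyContinuous μ ρ).map hφ.measurable).trans hφ.absolutelyContinuous
  rw [lintegral_rnDeriv_mul hac hg, lintegral_map' (hg.mono_ac hac) hφ.measurable.aemeasurable]
  exact lintegral_withDensity_eq_lintegral_mul₀ hρ (hg.comp_quasiMeasurePreserving hφ)

end Measure

section WeightedComposition

variable {X : Type*} {u : X → ℂ} {φ : X → X} {f : X → ℂ}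

def weightedComp (u : X → ℂ) (φ : X → X) (f : X → ℂ) : X → ℂ := fun x => u x * f (φ x)

lemma enorm_weightedComp_sq (x : X) :
    ‖weightedComp u φ f x‖ₑ ^ 2 = ‖u x‖ₑ ^ 2 * ‖f (φ x)‖ₑ ^ 2 := by
  rw [weightedComp, enorm_mul, mul_pow]

variable [MeasurableSpace X] {μ : Measure X}

noncomputable def weightedCompDensity (μ : Measure X) (u : X → ℂ) (φ : X → X) :
    ℕ → X → ℝ≥0∞
  | 0 => 1
  | i + 1 => ((μ.withDensity fun x => weightedCompDensity μ u φ i x * ‖u x‖ₑ ^ 2).map φ).rnDeriv μ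

def IsTwoExpansive (μ : Measure X) (T : (X → ℂ) → X → ℂ) : Prop :=
  ∀ f : X → ℂ, Measurable f → (∀ i ≤ 2, MemLp (T^[i] f) 2 μ) →
    (∫ x, ‖f x‖ ^ 2 ∂μ) - 2 * (∫ x, ‖T f x‖ ^ 2 ∂μ) + (∫ x, ‖T (T f) x‖ ^ 2 ∂μ) ≤ 0

lemma eq_weightedCompDensity {J : ℕ → X → ℝ≥0∞} (h0 : J 0 = fun _ => 1)
    (hsucc : ∀ i, J (i + 1) =
      ((μ.withDensity fun x => J i x * (‖u x‖₊ : ℝ≥0∞) ^ 2).map φ).rnDeriv μ) :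
    J = weightedCompDensity μ u φ := by
  funext i
  induction i with
  | zero => exact h0
  | succ i ih => rw [hsucc, ih]; rfl

@[simp]
lemma weightedCompDensity_zero : weightedCompDensity μ u φ 0 = 1 := rfl

lemma measurable_weightedCompDensity : ∀ i, Measurable (weightedCompDensity μ u φ i)
  | 0 => measurable_const
  | _ + 1 => Measure.measurable_rnDeriv _ _

lemma aestronglyMeasurable_weightedComp (hu : AEStronglyMeasurable u μ)
    (hφ : Measure.QuasiMeasurePreserving φ μ μ) (hf : AEStronglyMeasurable f μ) :
    AEStronglyMeasurable (weightedComp u φ f) μ :=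
  hu.mul (hf.comp_quasiMeasurePreserving hφ)

lemma aestronglyMeasurable_weightedComp_iterate (hu : AEStronglyMeasurable u μ)
    (hφ : Measure.QuasiMeasurePreserving φ μ μ) (hf : AEStronglyMeasurable f μ) (i : ℕ) :
    AEStronglyMeasurable ((weightedComp u φ)^[i] f) μ := by
  induction i with
  | zero => exact hf
  | succ i ih =>
    rw [Function.iterate_succ_apply']
    exact aestronglyMeasurable_weightedComp hu hφ ih

lemma lintegral_mul_enorm_sq_indicator_one {s : Set X} (hs : MeasurableSet s) (g : X → ℝ≥0∞) :
    ∫⁻ x, g x * ‖s.indicator (1 : X → ℂ) x‖ₑ ^ 2 ∂μ = ∫⁻ x in s, g x ∂μ := by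
  rw [← lintegral_indicator hs]
  congr with x
  by_cases hx : x ∈ s <;> simp [hx]

lemma IsTwoExpansive.lintegral_le {T : (X → ℂ) → X → ℂ} (hT : IsTwoExpansive μ T)
    (hf : Measurable f) (hmem : ∀ i ≤ 2, MemLp (T^[i] f) 2 μ) :
    ∫⁻ x, ‖f x‖ₑ ^ 2 ∂μ + ∫⁻ x, ‖T (T f) x‖ₑ ^ 2 ∂μ ≤ 2 * ∫⁻ x, ‖T f x‖ₑ ^ 2 ∂μ := by
  obtain ⟨h0, h1, h2⟩ : MemLp f 2 μ ∧ MemLp (T f) 2 μ ∧ MemLp (T (T f)) 2 μ :=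
    ⟨hmem 0 (by norm_num), hmem 1 (by norm_num), hmem 2 le_rfl⟩
  have fin : ∀ {g : X → ℂ}, MemLp g 2 μ → ∫⁻ x, ‖g x‖ₑ ^ 2 ∂μ ≠ ∞ := fun hg =>
    ((memLp_two_iff_lintegral_enorm_sq_lt_top hg.1).1 hg).ne
  have h := hT f hf hmem
  rw [integral_norm_sq_eq_toReal_lintegral h0.1, integral_norm_sq_eq_toReal_lintegral h1.1,
    integral_norm_sq_eq_toReal_lintegral h2.1] at h
  rw [← toReal_le_toReal (add_ne_top.2 ⟨fin h0, fin h2⟩) (mul_ne_top ofNat_ne_top (fin h1)),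
    toReal_add (fin h0) (fin h2), toReal_mul, toReal_ofNat]
  linarith

variable [SigmaFinite μ]

lemma lintegral_weightedCompDensity_succ_mul (hu : AEMeasurable u μ)
    (hφ : Measure.QuasiMeasurePreserving φ μ μ) (i : ℕ) {g : X → ℝ≥0∞} (hg : AEMeasurable g μ) :
    ∫⁻ x, weightedCompDensity μ u φ (i + 1) x * g x ∂μ
      = ∫⁻ x, weightedCompDensity μ u φ i x * ‖u x‖ₑ ^ 2 * g (φ x) ∂μ :=
  lintegral_rnDeriv_map_withDensity_mul hφ
    ((measurable_weightedCompDensity i).aemeasurable.mul (hu.enorm.pow_const 2)) hg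

lemma lintegral_weightedCompDensity_mul_enorm_sq_iterate (hu : AEStronglyMeasurable u μ)
    (hφ : Measure.QuasiMeasurePreserving φ μ μ) (hf : AEStronglyMeasurable f μ) (k i : ℕ) :
    ∫⁻ x, weightedCompDensity μ u φ k x * ‖(weightedComp u φ)^[i] f x‖ₑ ^ 2 ∂μ
      = ∫⁻ x, weightedCompDensity μ u φ (k + i) x * ‖f x‖ₑ ^ 2 ∂μ := by
  induction i generalizing f with
  | zero => rfl
  | succ i ih =>
    rw [Function.iterate_succ_apply, ih (aestronglyMeasurable_weightedComp hu hφ hf), ← add_assoc,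
      lintegral_weightedCompDensity_succ_mul hu.aemeasurable hφ _ (hf.enorm.pow_const 2)]
    simp_rw [enorm_weightedComp_sq, mul_assoc]

lemma lintegral_enorm_sq_weightedComp_iterate (hu : AEStronglyMeasurable u μ)
    (hφ : Measure.QuasiMeasurePreserving φ μ μ) (hf : AEStronglyMeasurable f μ) (i : ℕ) :
    ∫⁻ x, ‖(weightedComp u φ)^[i] f x‖ₑ ^ 2 ∂μ
      = ∫⁻ x, weightedCompDensity μ u φ i x * ‖f x‖ₑ ^ 2 ∂μ := by
  simpa using lintegral_weightedCompDensity_mul_enorm_sq_iterate hu hφ hf 0 i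

lemma memLp_weightedComp_iterate_iff (hu : AEStronglyMeasurable u μ)
    (hφ : Measure.QuasiMeasurePreserving φ μ μ) (hf : AEStronglyMeasurable f μ) (i : ℕ) :
    MemLp ((weightedComp u φ)^[i] f) 2 μ
      ↔ ∫⁻ x, weightedCompDensity μ u φ i x * ‖f x‖ₑ ^ 2 ∂μ < ∞ := by
  rw [memLp_two_iff_lintegral_enorm_sq_lt_top
    (aestronglyMeasurable_weightedComp_iterate hu hφ hf i),
    lintegral_enorm_sq_weightedComp_iterate hu hφ hf]

lemma IsTwoExpansive.ae_weightedCompDensity_two_add_one_le (hu : AEStronglyMeasurable u μ)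
    (hφ : Measure.QuasiMeasurePreserving φ μ μ) (hT : IsTwoExpansive μ (weightedComp u φ))
    (hfin₂ : ∀ᵐ x ∂μ, weightedCompDensity μ u φ 2 x < ∞) :
    ∀ᵐ x ∂μ, weightedCompDensity μ u φ 2 x + 1 ≤ 2 * weightedCompDensity μ u φ 1 x := by
  refine ae_le_of_forall_setLIntegral_le_of_lt_top
    ((measurable_weightedCompDensity 2).add_const 1)
    ((measurable_weightedCompDensity 1).const_mul 2)
    (by filter_upwards [hfin₂] with x hx using add_lt_top.2 ⟨hx, one_lt_top⟩)
    fun s hs hμs hI₂ hI₁ => ?_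
  set f : X → ℂ := s.indicator 1
  have hf : Measurable f := measurable_one.indicator hs
  have norm_iterate : ∀ i, ∫⁻ x, ‖(weightedComp u φ)^[i] f x‖ₑ ^ 2 ∂μ
      = ∫⁻ x in s, weightedCompDensity μ u φ i x ∂μ := fun i => by
    rw [lintegral_enorm_sq_weightedComp_iterate hu hφ hf.aestronglyMeasurable,
      lintegral_mul_enorm_sq_indicator_one hs]
  rw [lintegral_add_right _ measurable_const] at hI₂ ⊢
  rw [lintegral_const_mul _ (measurable_weightedCompDensity 1)] at hI₁ ⊢
  have hmem : ∀ i ≤ 2, MemLp ((weightedComp u φ)^[i] f) 2 μ := by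
    intro i hi
    rw [memLp_two_iff_lintegral_enorm_sq_lt_top
      (aestronglyMeasurable_weightedComp_iterate hu hφ hf.aestronglyMeasurable i), norm_iterate]
    interval_cases i
    · simpa using hμs
    · exact lt_top_of_mul_ne_top_right hI₁.ne two_ne_zero
    · exact (add_lt_top.1 hI₂).1
  have h := hT.lintegral_le hf hmem
  rw [show ∫⁻ x, ‖f x‖ₑ ^ 2 ∂μ = _ from norm_iterate 0,
    show ∫⁻ x, ‖weightedComp u φ f x‖ₑ ^ 2 ∂μ = _ from norm_iterate 1,
    show ∫⁻ x, ‖weightedComp u φ (weightedComp u φ f) x‖ₑ ^ 2 ∂μ = _ from norm_iterate 2] at h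
  simpa [add_comm] using h

lemma memLp_weightedComp_weightedComp (hu : AEStronglyMeasurable u μ)
    (hφ : Measure.QuasiMeasurePreserving φ μ μ)
    (hJ : ∀ᵐ x ∂μ, weightedCompDensity μ u φ 2 x ≤ 2 * weightedCompDensity μ u φ 1 x)
    (hf : AEStronglyMeasurable f μ) (hTf : MemLp (weightedComp u φ f) 2 μ) :
    MemLp (weightedComp u φ (weightedComp u φ f)) 2 μ := by
  rw [← Function.iterate_one (weightedComp u φ), memLp_weightedComp_iterate_iff hu hφ hf] at hTf
  refine (memLp_weightedComp_iterate_iff hu hφ hf 2).2 ?_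
  calc ∫⁻ x, weightedCompDensity μ u φ 2 x * ‖f x‖ₑ ^ 2 ∂μ
      ≤ ∫⁻ x, 2 * (weightedCompDensity μ u φ 1 x * ‖f x‖ₑ ^ 2) ∂μ := by
        refine lintegral_mono_ae ?_
        filter_upwards [hJ] with x hx
        rw [← mul_assoc]
        exact mul_le_mul_left hx _
    _ = 2 * ∫⁻ x, weightedCompDensity μ u φ 1 x * ‖f x‖ₑ ^ 2 ∂μ :=
        lintegral_const_mul' _ _ ofNat_ne_top
    _ < ∞ := mul_lt_top ofNat_lt_top hTf

end WeightedComposition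

theorem stmt10_general
    {X : Type*} [MeasurableSpace X] (μ : Measure X) [SigmaFinite μ]
    (u : X → ℂ) (hu : Measurable u)
    (φ : X → X) (hφ : Measurable φ)
    (hns : (μ.map φ) ≪ μ)
    (J : ℕ → X → ℝ≥0∞)
    (hJ0 : J 0 = fun _ => 1)
    (hJ : ∀ i : ℕ, J (i + 1) =
      ((μ.withDensity fun x => J i x * (‖u x‖₊ : ℝ≥0∞) ^ 2).map φ).rnDeriv μ)
    (hfin : ∀ i, ∀ᵐ x ∂μ, J i x < ∞)
    (T : (X → ℂ) → X → ℂ) (hT : T = fun f x => u x * f (φ x))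
    (hexp : ∀ f : X → ℂ, Measurable f → (∀ i ≤ 2, MemLp (T^[i] f) 2 μ) →
      (∫ x, ‖f x‖ ^ 2 ∂μ) - 2 * (∫ x, ‖T f x‖ ^ 2 ∂μ)
        + (∫ x, ‖T (T f) x‖ ^ 2 ∂μ) ≤ 0)
    (D : Set (X → ℂ))
    (hD : D = {f | MemLp f 2 μ ∧ MemLp (T f) 2 μ}) :
    (∀ᵐ x ∂μ, J 2 x + 1 ≤ 2 * J 1 x) ∧ ∀ f ∈ D, T f ∈ D := by
  obtain rfl : J = weightedCompDensity μ u φ := eq_weightedCompDensity hJ0 hJ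
  subst hT hD
  have hφ' : Measure.QuasiMeasurePreserving φ μ μ := ⟨hφ, hns⟩
  have hJ₂₁ := IsTwoExpansive.ae_weightedCompDensity_two_add_one_le hu.aestronglyMeasurable hφ'
    hexp (hfin 2)
  refine ⟨hJ₂₁, fun f ⟨hf, hTf⟩ => ⟨hTf, ?_⟩⟩
  refine memLp_weightedComp_weightedComp hu.aestronglyMeasurable hφ' ?_ hf.1 hTf
  filter_upwards [hJ₂₁] with x hx using le_self_add.trans hx

/-- Proposition 2.9(i): if `uC_φ` is 2-expansive then `J₂ ≤ 2J₁ − 1` a.e.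
(equivalently `J₂ + 1 ≤ 2J₁`) and `uC_φ` leaves its domain invariant. -/
theorem stmt10
    {X : Type*} [MeasurableSpace X] (μ : Measure X) [SigmaFinite μ]
    (u : X → ℂ) (hu : Measurable u)
    (φ : X → X) (hφ : Measurable φ)
    (hns : (μ.map φ) ≪ μ)
    (J : ℕ → X → ℝ≥0∞)
    (hJ0 : J 0 = fun _ => 1)
    (hJ : ∀ i : ℕ, J (i + 1) =
      ((μ.withDensity fun x => J i x * (‖u x‖₊ : ℝ≥0∞) ^ 2).map φ).rnDeriv μ)
    (hfin : ∀ i, ∀ᵐ x ∂μ, J i x < ∞)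
    (T : (X → ℂ) → X → ℂ) (hT : T = fun f x => u x * f (φ x))
    (hdense : Dense {f : Lp ℂ 2 μ |
        ∀ i ≤ 2, MemLp (T^[i] (f : X → ℂ)) 2 μ})
    (hexp : ∀ f : X → ℂ, Measurable f → (∀ i ≤ 2, MemLp (T^[i] f) 2 μ) →
      (∫ x, ‖f x‖ ^ 2 ∂μ) - 2 * (∫ x, ‖T f x‖ ^ 2 ∂μ)
        + (∫ x, ‖T (T f) x‖ ^ 2 ∂μ) ≤ 0)
    (D : Set (X → ℂ))
    (hD : D = {f | MemLp f 2 μ ∧ MemLp (T f) 2 μ}) :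
    (∀ᵐ x ∂μ, J 2 x + 1 ≤ 2 * J 1 x) ∧ ∀ f ∈ D, T f ∈ D :=
  stmt10_general μ u hu φ hφ hns J hJ0 hJ hfin T hT hexp D hD
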